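/- Let a > 0 and let R_1(a) = sup{R > 0 : g(·;a) > 0 on (0,R)}. Then J(r;a) → 0 as r → 0+, and for every r ∈ (0,R_1(a)) the derivative of J(·;a) satisfies J'(r;a) = G(r) · g(r;a)², where G(r) = (p/(3p-2)³) · ρ(r)^{2p/(3p-2)} · P(1/r). Consequently, with r_G the unique positive number such that P(1/r) > 0 on (0,r_G) and P(1/r) < 0 on (r_G,∞), the function J(·;a) is increasing on (0, min{r_G, R_1(a)}), and if R_1(a) > r_G it is decreasing on (r_G, R_1(a)). -/

import Mathlib

open Real Set Filter MeasureTheory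

/-- `f` is a solution of the profile equation with parameter `a`:
`f` is C¹ on `[0,∞)` with derivative `f'`, the map `r ↦ |f'(r)|^{p-2} f'(r)` is C¹ on `[0,∞)`
with derivative `F'`, the ODE
`(|f'|^{p-2}f')'(r) + ((N-1)/r)(|f'|^{p-2}f')(r) + f(r) - |f'(r)|^{p-1} = 0` holds for `r > 0`,
and `f 0 = a`, `f' 0 = 0`. -/
def IsProfileSol (N : ℕ) (p a : ℝ) (f f' F' : ℝ → ℝ) : Prop :=
  (∀ r ∈ Ici (0:ℝ), HasDerivWithinAt f (f' r) (Ici 0) r) ∧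
  ContinuousOn f' (Ici 0) ∧
  (∀ r ∈ Ici (0:ℝ), HasDerivWithinAt (fun s => |f' s| ^ (p - 2) * f' s) (F' r) (Ici 0) r) ∧
  ContinuousOn F' (Ici 0) ∧
  (∀ r, 0 < r →
    F' r + (((N : ℝ) - 1) / r) * (|f' r| ^ (p - 2) * f' r) + f r - |f' r| ^ (p - 1) = 0) ∧
  f 0 = a ∧ f' 0 = 0

/-- `g(r;a) = -|f'(r;a)|^{p-2} f'(r;a)`. -/
noncomputable def gFun (p : ℝ) (f' : ℝ → ℝ) (r : ℝ) : ℝ := -(|f' r| ^ (p - 2) * f' r)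

/-- `ρ(r) = r^{N-1} e^r`. -/
noncomputable def rho (N : ℕ) (r : ℝ) : ℝ := r ^ (N - 1) * Real.exp r

/-- the derivative of `ρ`. -/
noncomputable def rho' (N : ℕ) (r : ℝ) : ℝ :=
  (((N : ℝ) - 1) * r ^ (N - 2) + r ^ (N - 1)) * Real.exp r

/-- `w(r;a) = ρ(r) g(r;a)`. -/
noncomputable def wFun (N : ℕ) (p : ℝ) (f' : ℝ → ℝ) (r : ℝ) : ℝ := rho N r * gFun p f' r

/-- the derivative `w'(r;a) = ρ'(r) g(r;a) + ρ(r) g'(r;a)`, where `g' = -F'`. -/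
noncomputable def wDeriv (N : ℕ) (p : ℝ) (f' F' : ℝ → ℝ) (r : ℝ) : ℝ :=
  rho' N r * gFun p f' r - rho N r * F' r

/-- `α(r) = ρ(r)^{2p/(3p-2)}`. -/
noncomputable def alphaFun (N : ℕ) (p r : ℝ) : ℝ := rho N r ^ (2 * p / (3 * p - 2))

/-- `β(r) = (2(p-1)/(3p-2))(1 + (N-1)/r) α(r)`. -/
noncomputable def betaFun (N : ℕ) (p r : ℝ) : ℝ :=
  (2 * (p - 1) / (3 * p - 2)) * (1 + ((N : ℝ) - 1) / r) * alphaFun N p r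

/-- `γ(r)`. -/
noncomputable def gammaFun (N : ℕ) (p r : ℝ) : ℝ :=
  -(2 * (p - 1) * (2 - p) / (3 * p - 2) ^ 2
      + (4 * ((N : ℝ) - 1) * (p - 1) * (2 - p) / (3 * p - 2) ^ 2) * (1 / r)
      + (((N : ℝ) - 1) / (3 * p - 2) ^ 2)
          * (p * (3 * p - 2) + 2 * ((N : ℝ) - 1) * (p - 1) * (2 - p)) * (1 / r ^ 2))
    * alphaFun N p r

/-- The Pohozaev functional
`J(r;a) = (1/2)α g'² + β g g' + (1/2)γ g² + ((p-1)/p) δ g^{p/(p-1)}`, with `δ = α`, `g' = -F'`. -/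
noncomputable def Jfun (N : ℕ) (p : ℝ) (f' F' : ℝ → ℝ) (r : ℝ) : ℝ :=
  (1 / 2) * alphaFun N p r * (-(F' r)) ^ 2 + betaFun N p r * gFun p f' r * (-(F' r))
    + (1 / 2) * gammaFun N p r * gFun p f' r ^ 2
    + ((p - 1) / p) * alphaFun N p r * gFun p f' r ^ (p / (p - 1))

def M3 (N : ℕ) (p : ℝ) : ℝ :=
  (3 * p - 2) ^ 2 + ((N : ℝ) - 1) * (3 * p - 2) * (3 * p - 4)
    - 2 * (p - 1) * (2 - p) * ((N : ℝ) - 1) ^ 2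

def M2 (N : ℕ) (p : ℝ) : ℝ := (3 * p - 2) * (3 * p - 4) - 6 * ((N : ℝ) - 1) * (p - 1) * (2 - p)

def M1 (p : ℝ) : ℝ := -(6 * (p - 1) * (2 - p))

def M0 (p : ℝ) : ℝ := -(2 * (p - 1) * (2 - p))

/-- The cubic polynomial `P(z) = M₃(N-1)z³ + M₂(N-1)z² + M₁(N-1)z + M₀`. -/
def Pcub (N : ℕ) (p z : ℝ) : ℝ :=
  M3 N p * ((N : ℝ) - 1) * z ^ 3 + M2 N p * ((N : ℝ) - 1) * z ^ 2
    + M1 p * ((N : ℝ) - 1) * z + M0 p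

/-- `G(r) = (p/(3p-2)³) ρ(r)^{2p/(3p-2)} P(1/r)`. -/
noncomputable def Gfun (N : ℕ) (p r : ℝ) : ℝ :=
  (p / (3 * p - 2) ^ 3) * rho N r ^ (2 * p / (3 * p - 2)) * Pcub N p (1 / r)

/-! Because `δ = α` and `β`, `γ` are `α` times Laurent polynomials in `r`, the functional factors
as `J = α K`, where `K` is a polynomial in `g'`, `g`, `g / r` and `g ^ (p/(p-1))`. Where `g > 0`
we have `f' = -g ^ (1/(p-1))` and the ODE reads `g' = f - (1 + (N-1)/r) g`; differentiating `K`
and eliminating `g''` and `f'` leaves `K' + (2p/(3p-2)) (1 + (N-1)/r) K = (p/(3p-2)³) P(1/r) g²`,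
which together with `α' = (2p/(3p-2)) (1 + (N-1)/r) α` is `J' = G g²`. As `r → 0⁺`, `α → 0`
while `K` has a limit, because `g / r → -g'(0)`. -/

open Topology

lemma rho_pos (N : ℕ) {r : ℝ} (hr : 0 < r) : 0 < rho N r :=
  mul_pos (pow_pos hr _) (exp_pos r)

lemma hasDerivAt_rho {N : ℕ} (hN : 1 ≤ N) {r : ℝ} (hr : r ≠ 0) :
    HasDerivAt (rho N) ((1 + ((N : ℝ) - 1) / r) * rho N r) r := by
  obtain ⟨k, rfl⟩ := Nat.exists_eq_add_of_le' hN
  have h : HasDerivAt (rho (k + 1)) _ r := (hasDerivAt_pow k r).fun_mul (hasDerivAt_exp r)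
  refine h.congr_deriv ?_
  rcases k with _ | k
  · simp [rho]
  · simp only [rho, Nat.add_sub_cancel, Nat.cast_add, Nat.cast_one, pow_succ]
    field_simp
    ring

lemma hasDerivAt_alphaFun {N : ℕ} (hN : 1 ≤ N) (p : ℝ) {r : ℝ} (hr : 0 < r) :
    HasDerivAt (alphaFun N p)
      ((2 * p / (3 * p - 2)) * (1 + ((N : ℝ) - 1) / r) * alphaFun N p r) r := by
  have hρ := rho_pos N hr
  have h : HasDerivAt (alphaFun N p) _ r :=
    (hasDerivAt_rho hN hr.ne').rpow_const (p := 2 * p / (3 * p - 2)) (Or.inl hρ.ne')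
  refine h.congr_deriv ?_
  rw [rpow_sub_one hρ.ne', alphaFun]
  field_simp

lemma tendsto_alphaFun_zero {N : ℕ} (hN : 2 ≤ N) {p : ℝ} (hp : 2 / 3 < p) :
    Tendsto (alphaFun N p) (𝓝[>] 0) (𝓝 0) := by
  have hq : 0 < 2 * p / (3 * p - 2) := div_pos (by linarith) (by linarith)
  have hρ : Tendsto (rho N) (𝓝[>] 0) (𝓝 0) :=
    (((continuous_pow _).mul continuous_exp).tendsto' 0 0
      (by simp [zero_pow (by omega : N - 1 ≠ 0)])).mono_left nhdsWithin_le_nhds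
  have h := (continuousAt_rpow_const 0 _ (Or.inr hq.le)).tendsto.comp hρ
  rwa [zero_rpow hq.ne'] at h

noncomputable def JdivAlpha (N : ℕ) (p : ℝ) (f' F' : ℝ → ℝ) (r : ℝ) : ℝ :=
  1 / 2 * F' r ^ 2
    - 2 * (p - 1) / (3 * p - 2) * (gFun p f' r + ((N : ℝ) - 1) * (gFun p f' r / r)) * F' r
    - 1 / 2 * (2 * (p - 1) * (2 - p) / (3 * p - 2) ^ 2 * gFun p f' r ^ 2
        + 4 * ((N : ℝ) - 1) * (p - 1) * (2 - p) / (3 * p - 2) ^ 2 * (gFun p f' r / r * gFun p f' r)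
        + ((N : ℝ) - 1) * (p * (3 * p - 2) + 2 * ((N : ℝ) - 1) * (p - 1) * (2 - p))
            / (3 * p - 2) ^ 2 * (gFun p f' r / r) ^ 2)
    + (p - 1) / p * gFun p f' r ^ (p / (p - 1))

lemma Jfun_eq_alphaFun_mul (N : ℕ) (p : ℝ) (f' F' : ℝ → ℝ) (r : ℝ) :
    Jfun N p f' F' r = alphaFun N p r * JdivAlpha N p f' F' r := by
  simp only [Jfun, JdivAlpha, betaFun, gammaFun]
  ring

lemma Gfun_pos {N : ℕ} {p r : ℝ} (hp : 2 / 3 < p) (hr : 0 < r) (hP : 0 < Pcub N p (1 / r)) :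
    0 < Gfun N p r := by
  have : 0 < 3 * p - 2 := by linarith
  have := rho_pos N hr
  unfold Gfun
  positivity

lemma Gfun_neg {N : ℕ} {p r : ℝ} (hp : 2 / 3 < p) (hr : 0 < r) (hP : Pcub N p (1 / r) < 0) :
    Gfun N p r < 0 := by
  have : 0 < 3 * p - 2 := by linarith
  have := rho_pos N hr
  unfold Gfun
  exact mul_neg_of_pos_of_neg (by positivity) hP

lemma gFun_eq_of_neg {p : ℝ} {f' : ℝ → ℝ} {r : ℝ} (h : f' r < 0) :
    gFun p f' r = (-f' r) ^ (p - 1) := by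
  have hpos : 0 < -f' r := neg_pos.mpr h
  rw [gFun, abs_of_neg h, show p - 1 = p - 2 + 1 by ring, rpow_add_one hpos.ne']
  ring

lemma neg_of_gFun_pos {p : ℝ} {f' : ℝ → ℝ} {r : ℝ} (h : 0 < gFun p f' r) : f' r < 0 := by
  by_contra! hf'
  have : 0 ≤ |f' r| ^ (p - 2) * f' r := mul_nonneg (rpow_nonneg (abs_nonneg _) _) hf'
  rw [gFun] at h
  linarith

namespace IsProfileSol

variable {N : ℕ} {p a : ℝ} {f f' F' : ℝ → ℝ} {r r₁ r₂ : ℝ}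

lemma hasDerivAt_gFun (hf : IsProfileSol N p a f f' F') (hr : 0 < r) :
    HasDerivAt (gFun p f') (-F' r) r :=
  ((hf.2.2.1 r hr.le).hasDerivAt (Ici_mem_nhds hr)).neg

lemma F'_eq (hf : IsProfileSol N p a f f' F') (hr : 0 < r) (hg : 0 < gFun p f' r) :
    F' r = (1 + ((N : ℝ) - 1) / r) * gFun p f' r - f r := by
  have hode := hf.2.2.2.2.1 r hr
  have hf' := neg_of_gFun_pos hg
  rw [abs_of_neg hf', ← gFun_eq_of_neg hf', ← abs_of_neg hf', ← neg_neg (_ * f' r)] at hode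
  rw [gFun] at *
  linarith

lemma hasDerivAt_F' (hf : IsProfileSol N p a f f' F') (hr : 0 < r) (hg : 0 < gFun p f' r) :
    HasDerivAt F'
      ((1 + ((N : ℝ) - 1) / r) * -F' r - ((N : ℝ) - 1) / r ^ 2 * gFun p f' r - f' r) r := by
  have hev : (fun s => (1 + ((N : ℝ) - 1) / s) * gFun p f' s - f s) =ᶠ[𝓝 r] F' := by
    filter_upwards [eventually_gt_nhds hr,
      (hf.hasDerivAt_gFun hr).continuousAt.eventually (eventually_gt_nhds hg)] with s hs hgs
    exact (hf.F'_eq hs hgs).symm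
  have hc := ((hasDerivAt_const r ((N : ℝ) - 1)).fun_div (hasDerivAt_id' r) hr.ne').const_add 1
  refine (((hc.fun_mul (hf.hasDerivAt_gFun hr)).fun_sub
    ((hf.1 r hr.le).hasDerivAt (Ici_mem_nhds hr))).congr_of_eventuallyEq hev.symm).congr_deriv ?_
  field_simp
  ring

lemma hasDerivAt_JdivAlpha (hf : IsProfileSol N p a f f' F') (hp : 1 < p) (hr : 0 < r)
    (hg : 0 < gFun p f' r) :
    HasDerivAt (JdivAlpha N p f' F')
      (p / (3 * p - 2) ^ 3 * Pcub N p (1 / r) * gFun p f' r ^ 2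
        - 2 * p / (3 * p - 2) * (1 + ((N : ℝ) - 1) / r) * JdivAlpha N p f' F' r) r := by
  have hF := hf.hasDerivAt_F' hr hg
  have hgd := hf.hasDerivAt_gFun hr
  have hslope := hgd.fun_div (hasDerivAt_id' r) hr.ne'
  apply HasDerivAt.congr_deriv
  · unfold JdivAlpha
    exact ((((hF.fun_pow 2).const_mul _).fun_sub
      (((hgd.fun_add (hslope.const_mul _)).const_mul _).fun_mul hF)).fun_sub
      (((((hgd.fun_pow 2).const_mul _).fun_add ((hslope.fun_mul hgd).const_mul _)).fun_add
        ((hslope.fun_pow 2).const_mul _)).const_mul _)).fun_add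
      ((hgd.rpow_const (p := p / (p - 1)) (Or.inl hg.ne')).const_mul _)
  · -- with `v = -f' r` the identity becomes rational in `F' r`, `v`, `v ^ (p - 1)` and `r`
    have hf' := neg_of_gFun_pos hg
    obtain ⟨v, hv, hfv⟩ : ∃ v, 0 < v ∧ f' r = -v := ⟨-f' r, by linarith, by ring⟩
    have hgv : gFun p f' r = v ^ (p - 1) := by rw [gFun_eq_of_neg hf', hfv, neg_neg]
    have hp₁ : p - 1 ≠ 0 := by linarith
    have hpow_sub : gFun p f' r ^ (p / (p - 1) - 1) = v := by
      rw [hgv, ← rpow_mul hv.le,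
        show (p - 1) * (p / (p - 1) - 1) = 1 by field_simp; ring, rpow_one]
    have hpow : gFun p f' r ^ (p / (p - 1)) = v ^ (p - 1) * v := by
      rw [hgv, ← rpow_mul hv.le, ← rpow_add_one hv.ne', show (p - 1) * (p / (p - 1)) = p - 1 + 1 by
        field_simp; ring]
    simp only [JdivAlpha, Pcub, M3, M2, M1, M0, Nat.cast_ofNat, Nat.add_one_sub_one, pow_one]
    rw [hpow_sub, hpow, hfv, hgv]
    generalize v ^ (p - 1) = w
    have hp0 : p ≠ 0 := by linarith
    have hp3 : p * 3 - 2 ≠ 0 := by linarith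
    field_simp
    ring

lemma hasDerivAt_Jfun (hf : IsProfileSol N p a f f' F') (hN : 1 ≤ N) (hp : 1 < p) (hr : 0 < r)
    (hg : 0 < gFun p f' r) :
    HasDerivAt (Jfun N p f' F') (Gfun N p r * gFun p f' r ^ 2) r := by
  rw [show Jfun N p f' F' = alphaFun N p * JdivAlpha N p f' F' from
    funext (Jfun_eq_alphaFun_mul N p f' F')]
  refine ((hasDerivAt_alphaFun hN p hr).mul (hf.hasDerivAt_JdivAlpha hp hr hg)).congr_deriv ?_
  rw [show Gfun N p r = p / (3 * p - 2) ^ 3 * alphaFun N p r * Pcub N p (1 / r) from rfl]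
  ring

lemma tendsto_Jfun_zero (hf : IsProfileSol N p a f f' F') (hN : 2 ≤ N) (hp : 1 < p) :
    Tendsto (Jfun N p f' F') (𝓝[>] 0) (𝓝 0) := by
  have hg0 : gFun p f' 0 = 0 := by simp [gFun, hf.2.2.2.2.2.2]
  have hgd : HasDerivWithinAt (gFun p f') (-F' 0) (Ioi 0) 0 :=
    (hf.2.2.1 0 self_mem_Ici).neg.mono Ioi_subset_Ici_self
  have hg : Tendsto (gFun p f') (𝓝[>] 0) (𝓝 0) := by
    simpa only [hg0] using hgd.continuousWithinAt.tendsto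
  have hslope : Tendsto (fun r => gFun p f' r / r) (𝓝[>] 0) (𝓝 (-F' 0)) := by
    refine ((hasDerivWithinAt_iff_tendsto_slope' (lt_irrefl 0)).mp hgd).congr fun r => ?_
    simp [slope_def_field, hg0]
  have hF : Tendsto F' (𝓝[>] 0) (𝓝 (F' 0)) :=
    (hf.2.2.2.1 0 self_mem_Ici).mono Ioi_subset_Ici_self
  have hq : 0 < p / (p - 1) := div_pos (by linarith) (by linarith)
  have hgq : Tendsto (fun r => gFun p f' r ^ (p / (p - 1))) (𝓝[>] 0) (𝓝 0) := by
    have h := (continuousAt_rpow_const 0 _ (Or.inr hq.le)).tendsto.comp hg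
    rwa [zero_rpow hq.ne'] at h
  obtain ⟨L, hK⟩ : ∃ L, Tendsto (JdivAlpha N p f' F') (𝓝[>] 0) (𝓝 L) := by
    apply Exists.intro
    unfold JdivAlpha
    exact (((hF.pow 2).const_mul _).sub (((hg.add (hslope.const_mul _)).const_mul _).mul hF)).sub
      (((((hg.pow 2).const_mul _).add ((hslope.mul hg).const_mul _)).add
        ((hslope.pow 2).const_mul _)).const_mul _) |>.add (hgq.const_mul _)
  have hJ := (tendsto_alphaFun_zero hN (by linarith : 2 / 3 < p)).mul hK
  rw [zero_mul] at hJ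
  exact hJ.congr fun r => (Jfun_eq_alphaFun_mul N p f' F' r).symm

lemma strictMonoOn_Jfun (hf : IsProfileSol N p a f f' F') (hN : 1 ≤ N) (hp : 1 < p)
    (hr₁ : 0 < r₁) (hg : ∀ x ∈ Icc r₁ r₂, 0 < gFun p f' x)
    (hP : ∀ x ∈ Ioo r₁ r₂, 0 < Pcub N p (1 / x)) :
    StrictMonoOn (Jfun N p f' F') (Icc r₁ r₂) := by
  have hJ x (hx : x ∈ Icc r₁ r₂) := hf.hasDerivAt_Jfun hN hp (hr₁.trans_le hx.1) (hg x hx)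
  refine strictMonoOn_of_deriv_pos (convex_Icc r₁ r₂)
    (fun x hx => (hJ x hx).continuousAt.continuousWithinAt) fun x hx => ?_
  rw [interior_Icc] at hx
  rw [(hJ x (Ioo_subset_Icc_self hx)).deriv]
  exact mul_pos (Gfun_pos (by linarith) (hr₁.trans hx.1) (hP x hx))
    (pow_pos (hg x (Ioo_subset_Icc_self hx)) 2)

lemma strictAntiOn_Jfun (hf : IsProfileSol N p a f f' F') (hN : 1 ≤ N) (hp : 1 < p)
    (hr₁ : 0 < r₁) (hg : ∀ x ∈ Icc r₁ r₂, 0 < gFun p f' x)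
    (hP : ∀ x ∈ Ioo r₁ r₂, Pcub N p (1 / x) < 0) :
    StrictAntiOn (Jfun N p f' F') (Icc r₁ r₂) := by
  have hJ x (hx : x ∈ Icc r₁ r₂) := hf.hasDerivAt_Jfun hN hp (hr₁.trans_le hx.1) (hg x hx)
  refine strictAntiOn_of_deriv_neg (convex_Icc r₁ r₂)
    (fun x hx => (hJ x hx).continuousAt.continuousWithinAt) fun x hx => ?_
  rw [interior_Icc] at hx
  rw [(hJ x (Ioo_subset_Icc_self hx)).deriv]
  exact mul_neg_of_neg_of_pos (Gfun_neg (by linarith) (hr₁.trans hx.1) (hP x hx))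
    (pow_pos (hg x (Ioo_subset_Icc_self hx)) 2)

end IsProfileSol

theorem stmt14_general (N : ℕ) (hN : 2 ≤ N) (p : ℝ)
    (hp1 : 2 * (N : ℝ) / ((N : ℝ) + 1) < p)
    (a : ℝ)
    (f f' F' : ℝ → ℝ) (hf : IsProfileSol N p a f f' F') :
    Filter.Tendsto (Jfun N p f' F') (nhdsWithin 0 (Set.Ioi 0)) (nhds 0) ∧
    (∀ r, 0 < r → (∀ s, 0 < s → s ≤ r → 0 < gFun p f' s) →
      HasDerivAt (Jfun N p f' F') (Gfun N p r * gFun p f' r ^ 2) r) ∧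
    (∀ rG : ℝ, 0 < rG →
      (∀ r, 0 < r → r < rG → 0 < Pcub N p (1 / r)) →
      (∀ r, rG < r → Pcub N p (1 / r) < 0) →
      (∀ r₁ r₂, 0 < r₁ → r₁ < r₂ → r₂ < rG →
        (∀ s, 0 < s → s ≤ r₂ → 0 < gFun p f' s) →
        Jfun N p f' F' r₁ < Jfun N p f' F' r₂) ∧
      (∀ r₁ r₂, rG < r₁ → r₁ < r₂ →
        (∀ s, 0 < s → s ≤ r₂ → 0 < gFun p f' s) →
        Jfun N p f' F' r₂ < Jfun N p f' F' r₁)) := by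
  have hN1 : 1 ≤ N := by omega
  have hp : 1 < p := by
    have : (2 : ℝ) ≤ N := by exact_mod_cast hN
    have : 1 < 2 * (N : ℝ) / ((N : ℝ) + 1) := by rw [lt_div_iff₀ (by positivity)]; linarith
    linarith
  refine ⟨hf.tendsto_Jfun_zero hN hp, fun r hr hg => hf.hasDerivAt_Jfun hN1 hp hr (hg r hr le_rfl),
    fun rG hrG hPpos hPneg => ⟨fun r₁ r₂ h₁ h₁₂ h₂ hg => ?_, fun r₁ r₂ h₁ h₁₂ hg => ?_⟩⟩
  · exact hf.strictMonoOn_Jfun hN1 hp h₁ (fun x hx => hg x (h₁.trans_le hx.1) hx.2)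
      (fun x hx => hPpos x (h₁.trans hx.1) (hx.2.trans h₂))
      (left_mem_Icc.2 h₁₂.le) (right_mem_Icc.2 h₁₂.le) h₁₂
  · have h₀ := hrG.trans h₁
    exact hf.strictAntiOn_Jfun hN1 hp h₀ (fun x hx => hg x (h₀.trans_le hx.1) hx.2)
      (fun x hx => hPneg x (h₁.trans hx.1))
      (left_mem_Icc.2 h₁₂.le) (right_mem_Icc.2 h₁₂.le) h₁₂

/-- `J(r;a) → 0` as `r → 0⁺`, `J'(r;a) = G(r) g(r;a)²` on `(0, R₁(a))`
(a point `r > 0` lies in `(0, R₁(a))` iff `g(·;a) > 0` on `(0,r]`), and `J(·;a)` is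
increasing on `(0, min{r_G, R₁(a)})` and decreasing on `(r_G, R₁(a))`. -/
theorem stmt14 (N : ℕ) (hN : 2 ≤ N) (p : ℝ)
    (hp1 : 2 * (N : ℝ) / ((N : ℝ) + 1) < p) (hp2 : p < 2)
    (a : ℝ) (ha : 0 < a)
    (f f' F' : ℝ → ℝ) (hf : IsProfileSol N p a f f' F') :
    Filter.Tendsto (Jfun N p f' F') (nhdsWithin 0 (Set.Ioi 0)) (nhds 0) ∧
    (∀ r, 0 < r → (∀ s, 0 < s → s ≤ r → 0 < gFun p f' s) →
      HasDerivAt (Jfun N p f' F') (Gfun N p r * gFun p f' r ^ 2) r) ∧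
    (∀ rG : ℝ, 0 < rG →
      (∀ r, 0 < r → r < rG → 0 < Pcub N p (1 / r)) →
      (∀ r, rG < r → Pcub N p (1 / r) < 0) →
      (∀ r₁ r₂, 0 < r₁ → r₁ < r₂ → r₂ < rG →
        (∀ s, 0 < s → s ≤ r₂ → 0 < gFun p f' s) →
        Jfun N p f' F' r₁ < Jfun N p f' F' r₂) ∧
      (∀ r₁ r₂, rG < r₁ → r₁ < r₂ →
        (∀ s, 0 < s → s ≤ r₂ → 0 < gFun p f' s) →
        Jfun N p f' F' r₂ < Jfun N p f' F' r₁)) :=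
  stmt14_general N hN p hp1 a f f' F' hf
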